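/- arXiv:2510.18281 — 2 statements merged into one kernel-verified Lean document; each statement's English description precedes it below -/
import Mathlib

section
/- Let (Ω, 𝒜, μ) be a probability space, X : Ω → ℝⁿ a square-integrable random vector, x : Ω → ℝᵖ (the historical observations), z : Ω → ℝⁿ (the true latent variables), and ẑ : Ω → ℝⁿ (the estimated latent variables). Suppose (i) z = H ∘ ẑ for a measurable equivalence H : ℝⁿ ≃ ℝⁿ (block-wise identifiability of the latent variables), and (ii) E[X | σ(x, z)] is not μ-almost everywhere equal to E[X | σ(x)] (the latent variables influence the forecast). Then R(σ(x)) > R(σ(x, ẑ)) = R(σ(x, z)). -/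
open MeasureTheory

section Aux

variable {α : Type*} {E : Type*} [NormedAddCommGroup E] [InnerProductSpace ℝ E]
  [CompleteSpace E]

/-- The L² conditional expectation (orthogonal projection) agrees a.e. with `condexp`. -/
lemma aux_condexpL2_ae_eq_condexp {m m0 : MeasurableSpace α} (hm : m ≤ m0)
    {μ : Measure α} [IsFiniteMeasure μ] {X : α → E} (hX : MemLp X 2 μ) :
    (condExpL2 E ℝ hm (hX.toLp X) : α → E) =ᵐ[μ] μ[X|m] := by
  refine ae_eq_condExp_of_forall_setIntegral_eq hm (hX.integrable one_le_two)
    (fun s _ _ => (integrable_condExpL2_of_isFiniteMeasure hm).integrableOn)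
    (fun s hs hμs => ?_)
    (aestronglyMeasurable_condExpL2 hm _)
  rw [integral_condExpL2_eq hm (hX.toLp X) hs hμs.ne]
  exact setIntegral_congr_ae (hm s hs)
    ((hX.coeFn_toLp).mono fun a ha _ => ha)

/-- Pythagoras / tower identity for Bayes risks over nested σ-algebras. -/
lemma aux_risk_decomposition {m₁ m₂ m0 : MeasurableSpace α} (h12 : m₁ ≤ m₂) (h2 : m₂ ≤ m0)
    {μ : Measure α} [IsProbabilityMeasure μ] {X : α → E} (hX : MemLp X 2 μ) :
    (∫ a, ‖X a - (μ[X|m₁]) a‖ ^ 2 ∂(μ : Measure α))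
      = (∫ a, ‖X a - (μ[X|m₂]) a‖ ^ 2 ∂μ)
        + ∫ a, ‖(μ[X|m₂]) a - (μ[X|m₁]) a‖ ^ 2 ∂μ := by
  haveI : Fact (m₁ ≤ m0) := ⟨h12.trans h2⟩
  haveI : Fact (m₂ ≤ m0) := ⟨h2⟩
  set h1 : m₁ ≤ m0 := h12.trans h2 with hh1
  set F : α →₂[μ] E := hX.toLp X with hF
  set A : α →₂[μ] E := (condExpL2 E ℝ h1 F : Lp E 2 μ) with hA
  set B : α →₂[μ] E := (condExpL2 E ℝ h2 F : Lp E 2 μ) with hB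
  have hA_eq : (A : α → E) =ᵐ[μ] μ[X|m₁] := aux_condexpL2_ae_eq_condexp h1 hX
  have hB_eq : (B : α → E) =ᵐ[μ] μ[X|m₂] := aux_condexpL2_ae_eq_condexp h2 hX
  -- orthogonality: F - B ⟂ (B - A)
  have hBA_meas : AEStronglyMeasurable[m₂] (⇑(B - A)) μ := by
    refine AEStronglyMeasurable.congr ?_ (Lp.coeFn_sub B A).symm
    exact AEStronglyMeasurable.sub (aestronglyMeasurable_condExpL2 h2 F)
      ((aestronglyMeasurable_condExpL2 h1 F).mono h12)
  have horth : (inner ℝ (F - B) (B - A) : ℝ) = 0 := by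
    have := inner_condExpL2_eq_inner_fun (𝕜 := ℝ) h2 F (B - A) hBA_meas
    rw [← hB] at this
    rw [inner_sub_left, this, sub_self]
  -- Pythagoras in L²
  have hsplit : F - A = (F - B) + (B - A) := by abel
  have hnorm : ‖F - A‖ ^ 2 = ‖F - B‖ ^ 2 + ‖B - A‖ ^ 2 := by
    rw [hsplit, @norm_add_sq_real, horth]; ring
  -- translate L² norms into integrals
  have key : ∀ (G : α →₂[μ] E), ‖G‖ ^ 2 = ∫ a, ‖G a‖ ^ 2 ∂μ := by
    intro G
    have h := L2.inner_def (𝕜 := ℝ) G G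
    rw [real_inner_self_eq_norm_sq] at h
    rw [h]
    exact integral_congr_ae (Filter.Eventually.of_forall fun a => real_inner_self_eq_norm_sq _)
  have hFA : (⇑(F - A) : α → E) =ᵐ[μ] fun a => X a - (μ[X|m₁]) a := by
    filter_upwards [Lp.coeFn_sub F A, hX.coeFn_toLp, hA_eq] with a h₁ h₂ h₃
    rw [h₁, Pi.sub_apply, h₂, h₃]
  have hFB : (⇑(F - B) : α → E) =ᵐ[μ] fun a => X a - (μ[X|m₂]) a := by
    filter_upwards [Lp.coeFn_sub F B, hX.coeFn_toLp, hB_eq] with a h₁ h₂ h₃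
    rw [h₁, Pi.sub_apply, h₂, h₃]
  have hBA : (⇑(B - A) : α → E) =ᵐ[μ] fun a => (μ[X|m₂]) a - (μ[X|m₁]) a := by
    filter_upwards [Lp.coeFn_sub B A, hB_eq, hA_eq] with a h₁ h₂ h₃
    rw [h₁, Pi.sub_apply, h₂, h₃]
  have e1 : ∫ a, ‖X a - (μ[X|m₁]) a‖ ^ 2 ∂μ = ‖F - A‖ ^ 2 := by
    rw [key]; exact integral_congr_ae (hFA.mono fun a ha => by dsimp only; rw [ha])
  have e2 : ∫ a, ‖X a - (μ[X|m₂]) a‖ ^ 2 ∂μ = ‖F - B‖ ^ 2 := by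
    rw [key]; exact integral_congr_ae (hFB.mono fun a ha => by dsimp only; rw [ha])
  have e3 : ∫ a, ‖(μ[X|m₂]) a - (μ[X|m₁]) a‖ ^ 2 ∂μ = ‖B - A‖ ^ 2 := by
    rw [key]; exact integral_congr_ae (hBA.mono fun a ha => by dsimp only; rw [ha])
  rw [e1, e2, e3, hnorm]

/-- The conditional expectation of an L² function is in L². -/
lemma aux_memℒp_condexp {m m0 : MeasurableSpace α} (hm : m ≤ m0)
    {μ : Measure α} [IsFiniteMeasure μ] {X : α → E} (hX : MemLp X 2 μ) :
    MemLp (μ[X|m]) 2 μ :=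
  (Lp.memLp ((condExpL2 E ℝ hm (hX.toLp X) : Lp E 2 μ))).ae_eq
    (aux_condexpL2_ae_eq_condexp hm hX)

end Aux

/-- If `f` factors measurably through `g`, then `σ(f) ≤ σ(g)`. -/
lemma aux_comap_le_comap {α β γ : Type*} [MeasurableSpace β] [MeasurableSpace γ]
    {f : α → β} {g : α → γ} {φ : γ → β} (hφ : Measurable φ) (h : ∀ a, f a = φ (g a)) :
    MeasurableSpace.comap f inferInstance ≤ MeasurableSpace.comap g inferInstance := by
  have hfg : f = φ ∘ g := funext h
  rw [hfg, ← MeasurableSpace.comap_comp]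
  exact MeasurableSpace.comap_mono hφ.comap_le

/-- Theorem 1, identifiable case (`R_o > R_ẑ = R_z`): if the estimated latent
variables `zhat` block-wise identify the true latent variables `z` via a measurable
equivalence `H` (Definition 1, `z = H ∘ zhat`), and the latent variables genuinely
influence the forecast (i.e. `E[X|σ(x,z)]` is not μ-a.e. equal to `E[X|σ(x)]`),
then the Bayes risk from the history alone strictly exceeds the (equal) Bayes risks
obtained by adding the estimated or the true latent variables. -/
theorem identifiable_case_strict_risk_reduction
    {Ω : Type*} {mΩ : MeasurableSpace Ω} (μ : Measure Ω) [IsProbabilityMeasure μ]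
    {n p : ℕ} (X : Ω → EuclideanSpace ℝ (Fin n)) (hX : MemLp X 2 μ)
    (x : Ω → (Fin p → ℝ)) (z zhat : Ω → (Fin n → ℝ))
    (hx : Measurable x) (hz : Measurable z) (hzhat : Measurable zhat)
    (H : (Fin n → ℝ) ≃ᵐ (Fin n → ℝ)) (hzH : ∀ ω, z ω = H (zhat ω))
    (hne : ¬ ((μ[X|MeasurableSpace.comap (fun ω => (x ω, z ω)) inferInstance])
        =ᵐ[μ] (μ[X|MeasurableSpace.comap x inferInstance]))) :
    ∫ ω, ‖X ω - (μ[X|MeasurableSpace.comap x inferInstance]) ω‖ ^ 2 ∂μ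
      > ∫ ω, ‖X ω - (μ[X|MeasurableSpace.comap (fun ω => (x ω, zhat ω)) inferInstance]) ω‖ ^ 2 ∂μ
    ∧ ∫ ω, ‖X ω - (μ[X|MeasurableSpace.comap (fun ω => (x ω, zhat ω)) inferInstance]) ω‖ ^ 2 ∂μ
      = ∫ ω, ‖X ω - (μ[X|MeasurableSpace.comap (fun ω => (x ω, z ω)) inferInstance]) ω‖ ^ 2 ∂μ := by
  -- the σ-algebras generated by (x, z) and (x, zhat) coincide
  have hcomap : MeasurableSpace.comap (fun ω => (x ω, zhat ω)) inferInstance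
      = MeasurableSpace.comap (fun ω => (x ω, z ω)) inferInstance := by
    apply le_antisymm
    · exact aux_comap_le_comap (Measurable.prodMk measurable_fst
        (H.symm.measurable.comp measurable_snd))
        (fun ω => by simp [hzH ω])
    · exact aux_comap_le_comap (Measurable.prodMk measurable_fst
        (H.measurable.comp measurable_snd))
        (fun ω => by simp [hzH ω])
  rw [hcomap]
  set m₁ : MeasurableSpace Ω := MeasurableSpace.comap x inferInstance with hm₁def
  set m₂ : MeasurableSpace Ω := MeasurableSpace.comap (fun ω => (x ω, z ω)) inferInstance
    with hm₂def
  have h12 : m₁ ≤ m₂ :=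
    aux_comap_le_comap (φ := Prod.fst) measurable_fst (fun ω => rfl)
  have h2 : m₂ ≤ mΩ := (hx.prodMk hz).comap_le
  refine ⟨?_, rfl⟩
  -- strict inequality via the risk decomposition
  rw [aux_risk_decomposition h12 h2 hX]
  have hD2 : MemLp (fun a => (μ[X|m₂]) a - (μ[X|m₁]) a) 2 μ :=
    (aux_memℒp_condexp h2 hX).sub (aux_memℒp_condexp (h12.trans h2) hX)
  have hDint : Integrable (fun a => ‖(μ[X|m₂]) a - (μ[X|m₁]) a‖ ^ 2) μ := by
    have := hD2.integrable_norm_rpow two_ne_zero ENNReal.ofNat_ne_top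
    simpa [ENNReal.toReal_ofNat, Real.rpow_natCast] using this
  have hnonneg : 0 ≤ ∫ a, ‖(μ[X|m₂]) a - (μ[X|m₁]) a‖ ^ 2 ∂μ :=
    integral_nonneg fun a => by positivity
  have hpos : 0 < ∫ a, ‖(μ[X|m₂]) a - (μ[X|m₁]) a‖ ^ 2 ∂μ := by
    rcases hnonneg.lt_or_eq with h | h
    · exact h
    · exfalso
      apply hne
      have h0 : (fun a => ‖(μ[X|m₂]) a - (μ[X|m₁]) a‖ ^ 2) =ᵐ[μ] 0 :=
        (integral_eq_zero_iff_of_nonneg (fun a => by positivity) hDint).mp h.symm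
      filter_upwards [h0] with a ha
      have : ‖(μ[X|m₂]) a - (μ[X|m₁]) a‖ ^ 2 = 0 := ha
      have hnz : ‖(μ[X|m₂]) a - (μ[X|m₁]) a‖ = 0 := by
        nlinarith [norm_nonneg ((μ[X|m₂]) a - (μ[X|m₁]) a)]
      exact sub_eq_zero.mp (norm_eq_zero.mp hnz)
  linarith
end

section
/- Let r : ℝⁿ × ℝⁿ → ℝⁿ be differentiable at a point (a, b), and suppose each component rᵢ(a, b) depends only on a and on the i-th coordinate bᵢ of b (for all b' agreeing with b in the i-th coordinate, rᵢ(a, b') = rᵢ(a, b)). Define κ : ℝⁿ × ℝⁿ → ℝⁿ × ℝⁿ by κ(a, b) = (a, r(a, b)). Then the determinant of the Fréchet derivative of κ at (a, b), viewed as a linear endomorphism of ℝⁿ × ℝⁿ, equals ∏_{i=1}^{n} (∂rᵢ/∂bᵢ)(a, b), the product of the partial derivatives of the components of r in their own second-slot coordinates. -/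
/-- Triangular Jacobian determinant (used for the transformations `κ_z` and `κ_o`
in Eqs. (5) and (7)): if each component `rᵢ(a, b)` of `r : ℝⁿ × ℝⁿ → ℝⁿ` depends
only on `a` and on the `i`-th coordinate of `b`, and `r` is differentiable at
`(a, b)`, then the Jacobian of `κ(a, b) = (a, r (a, b))` at `(a, b)` has the block
form `[[I, 0], [*, diag(∂rᵢ/∂bᵢ)]]`, so its determinant equals
`∏ i, (∂rᵢ/∂bᵢ)(a, b)`. -/
theorem det_fderiv_triangular_noise_estimator {n : ℕ}
    (r : (Fin n → ℝ) × (Fin n → ℝ) → (Fin n → ℝ)) (a b : Fin n → ℝ)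
    (hdiff : DifferentiableAt ℝ r (a, b))
    (hdep : ∀ (i : Fin n) (a' b' b'' : Fin n → ℝ),
      b'' i = b' i → r (a', b'') i = r (a', b') i) :
    (fderiv ℝ (fun p : (Fin n → ℝ) × (Fin n → ℝ) => (p.1, r p)) (a, b)).det
      = ∏ i, fderiv ℝ r (a, b) (0, Pi.single i 1) i := by
  classical
  set L := fderiv ℝ r (a, b) with hL
  -- off-diagonal entries of the lower-right block vanish
  have hzero : ∀ i j : Fin n, j ≠ i → L (0, Pi.single i 1) j = 0 := by
    intro i j hji
    set v : Fin n → ℝ := Pi.single i 1 with hv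
    have hc : HasDerivAt (fun t : ℝ => ((a, b + t • v) :
        (Fin n → ℝ) × (Fin n → ℝ))) ((0 : Fin n → ℝ), v) 0 := by
      have h2 : HasDerivAt (fun t : ℝ => b + t • v)
          ((1 : ℝ) • v) 0 :=
        ((hasDerivAt_id (0 : ℝ)).smul_const (v)).const_add b
      rw [one_smul] at h2
      exact (hasDerivAt_const (0 : ℝ) a).prodMk h2
    have hc0 : (fun t : ℝ => ((a, b + t • v) :
        (Fin n → ℝ) × (Fin n → ℝ))) 0 = (a, b) := by simp
    have hrc : HasDerivAt (fun t : ℝ => r (a, b + t • v))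
        (L (0, v)) 0 := by
      have hF : HasFDerivAt r L (a, b + (0 : ℝ) • v) := by
        simpa using hdiff.hasFDerivAt
      exact hF.comp_hasDerivAt 0 hc
    have hj : HasDerivAt (fun t : ℝ => r (a, b + t • v) j)
        (L (0, v) j) 0 := by
      have := ((ContinuousLinearMap.proj j :
          (Fin n → ℝ) →L[ℝ] ℝ).hasFDerivAt).comp_hasDerivAt 0 hrc
      exact this
    have hconst : (fun t : ℝ => r (a, b + t • v) j)
        = fun _ => r (a, b) j := by
      funext t
      exact hdep j a b (b + t • v) (by simp [hv, Pi.single_eq_of_ne hji])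
    have hj0 : HasDerivAt (fun t : ℝ => r (a, b + t • v) j) 0 0 := by
      rw [hconst]; exact hasDerivAt_const 0 _
    exact hj.unique hj0
  -- the derivative of κ
  have hκ : fderiv ℝ (fun p : (Fin n → ℝ) × (Fin n → ℝ) => (p.1, r p)) (a, b)
      = (ContinuousLinearMap.fst ℝ (Fin n → ℝ) (Fin n → ℝ)).prod L := by
    rw [DifferentiableAt.fderiv_prodMk differentiableAt_fst hdiff, fderiv_fst]
  rw [hκ]
  set K := (ContinuousLinearMap.fst ℝ (Fin n → ℝ) (Fin n → ℝ)).prod L with hK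
  have hdet : K.det = LinearMap.det (K : ((Fin n → ℝ) × (Fin n → ℝ)) →ₗ[ℝ]
      ((Fin n → ℝ) × (Fin n → ℝ))) := rfl
  rw [hdet]
  set B := (Pi.basisFun ℝ (Fin n)).prod (Pi.basisFun ℝ (Fin n)) with hB
  rw [← LinearMap.det_toMatrix B]
  have hM : LinearMap.toMatrix B B (K : ((Fin n → ℝ) × (Fin n → ℝ)) →ₗ[ℝ]
      ((Fin n → ℝ) × (Fin n → ℝ)))
      = Matrix.fromBlocks 1 0
          (Matrix.of fun j i => L (Pi.single i 1, 0) j)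
          (Matrix.diagonal fun i => L (0, Pi.single i 1) i) := by
    ext j i
    rcases j with j | j <;> rcases i with i | i <;>
      simp only [LinearMap.toMatrix_apply, hB, Module.Basis.prod_repr_inl, Module.Basis.prod_repr_inr,
        Matrix.fromBlocks_apply₁₁, Matrix.fromBlocks_apply₁₂, Matrix.fromBlocks_apply₂₁,
        Matrix.fromBlocks_apply₂₂]
    · have : B (Sum.inl i) = (Pi.single i 1, 0) := by
        apply Prod.ext
        · rw [hB, Module.Basis.prod_apply_inl_fst, Pi.basisFun_apply]
        · rw [hB, Module.Basis.prod_apply_inl_snd]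
      rw [← hB, this]
      simp [hK, Matrix.one_apply, Pi.single_apply, eq_comm]
    · have : B (Sum.inr i) = ((0 : Fin n → ℝ), Pi.single i 1) := by
        apply Prod.ext
        · rw [hB, Module.Basis.prod_apply_inr_fst]
        · rw [hB, Module.Basis.prod_apply_inr_snd, Pi.basisFun_apply]
      rw [← hB, this]
      simp [hK]
    · have : B (Sum.inl i) = (Pi.single i 1, 0) := by
        apply Prod.ext
        · rw [hB, Module.Basis.prod_apply_inl_fst, Pi.basisFun_apply]
        · rw [hB, Module.Basis.prod_apply_inl_snd]
      rw [← hB, this]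
      simp [hK]
    · have : B (Sum.inr i) = ((0 : Fin n → ℝ), Pi.single i 1) := by
        apply Prod.ext
        · rw [hB, Module.Basis.prod_apply_inr_fst]
        · rw [hB, Module.Basis.prod_apply_inr_snd, Pi.basisFun_apply]
      rw [← hB, this]
      rcases eq_or_ne j i with h | h
      · subst h; simp [hK, Matrix.diagonal_apply_eq]
      · simp [hK, Matrix.diagonal_apply_ne _ h, hzero i j h]
  rw [hM, Matrix.det_fromBlocks_zero₁₂, Matrix.det_one, one_mul, Matrix.det_diagonal]
end
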